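/- arXiv:1107.1028 — 2 statements merged into one kernel-verified Lean document; each statement's English description precedes it below -/
import Mathlib

section
/- There exists a constant C such that the following holds. Let v, w : ℝ² → ℝ² be continuously differentiable vector fields with compact support contained in Ω₊ = {(x,y) : y > 1}, and let ū : Ω₊ → ℝ² be a continuous vector field with ‖ū‖_{L²(Ω₊)} < ∞ and M := sup_{(x,y)∈Ω₊} y·|ū(x,y)| < ∞. Then |∫_{Ω₊} [((v+e₁)·∇)w]·ū dx dy| ≤ C (1 + ‖∇v‖_{L²(Ω₊)}) ‖∇w‖_{L²(Ω₊)} (‖ū‖_{L²(Ω₊)} + M). -/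
open MeasureTheory

noncomputable section

/-- Squared Euclidean norm of a vector in `ℝ²`. -/
def nsq (v : ℝ × ℝ) : ℝ := v.1 ^ 2 + v.2 ^ 2

/-- Euclidean dot product on `ℝ²`. -/
def dot2 (a b : ℝ × ℝ) : ℝ := a.1 * b.1 + a.2 * b.2

/-- Squared Frobenius norm of the Jacobian matrix `∇v` of a vector field `v` at `p`. -/
def jacsq (v : ℝ × ℝ → ℝ × ℝ) (p : ℝ × ℝ) : ℝ :=
  nsq (fderiv ℝ v p (1, 0)) + nsq (fderiv ℝ v p (0, 1))

/-- The half-plane `Ω₊ = {(x,y) : y > 1}`. -/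
def OmegaPlus : Set (ℝ × ℝ) := {p | 1 < p.2}

/-!
Pointwise, `|((v + e₁)·∇)w · ū| ≤ |∇w| |ū| + |∇w| |v| |ū|`, and `|ū| ≤ M / y` on `Ω₊`.
By Cauchy–Schwarz the first term integrates to at most `‖∇w‖ ‖ū‖` and the second to at most
`M ‖∇w‖ ‖v / y‖`. Hardy's inequality `‖v / y‖ ≤ 2 ‖∂_y v‖` closes the estimate with `C = 2`.
On each vertical line it follows from `(-g² / y)' = (g / y)² - 2 (g / y) g'`: integrating gives
`∫ (g / y)² = 2 ∫ (g / y) g' ≤ 2 ‖g / y‖ ‖g'‖`; Fubini then integrates over the lines.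
-/

open Set Topology

lemma nsq_nonneg (a : ℝ × ℝ) : 0 ≤ nsq a := by unfold nsq; positivity

lemma continuous_nsq : Continuous nsq := by unfold nsq; fun_prop

lemma jacsq_nonneg (v : ℝ × ℝ → ℝ × ℝ) (p : ℝ × ℝ) : 0 ≤ jacsq v p :=
  add_nonneg (nsq_nonneg _) (nsq_nonneg _)

lemma measurableSet_OmegaPlus : MeasurableSet OmegaPlus :=
  measurableSet_lt measurable_const measurable_snd

lemma abs_dot2_le (a b : ℝ × ℝ) : |dot2 a b| ≤ √(nsq a) * √(nsq b) := by
  rw [← Real.sqrt_mul (nsq_nonneg a), ← Real.sqrt_sq_eq_abs]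
  exact Real.sqrt_le_sqrt (by unfold dot2 nsq; nlinarith [sq_nonneg (a.1 * b.2 - a.2 * b.1)])

lemma sqrt_nsq_add_le (a b : ℝ × ℝ) : √(nsq (a + b)) ≤ √(nsq a) + √(nsq b) := by
  have hab : nsq (a + b) = nsq a + 2 * dot2 a b + nsq b := by
    simp only [nsq, dot2, Prod.fst_add, Prod.snd_add]; ring
  have hdot := (le_abs_self _).trans (abs_dot2_le a b)
  rw [Real.sqrt_le_left (by positivity), hab]
  nlinarith [Real.sq_sqrt (nsq_nonneg a), Real.sq_sqrt (nsq_nonneg b)]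

lemma sqrt_nsq_fderiv_apply_le (w : ℝ × ℝ → ℝ × ℝ) (p z : ℝ × ℝ) :
    √(nsq (fderiv ℝ w p z)) ≤ √(jacsq w p) * √(nsq z) := by
  set D := fderiv ℝ w p
  have hDz : D z = z.1 • D (1, 0) + z.2 • D (0, 1) := by
    rw [← map_smul, ← map_smul, ← map_add]; congr 1; ext <;> simp
  rw [← Real.sqrt_mul (jacsq_nonneg w p)]
  refine Real.sqrt_le_sqrt ?_
  simp only [jacsq, nsq, hDz, Prod.fst_add, Prod.snd_add, Prod.smul_fst, Prod.smul_snd,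
    smul_eq_mul]
  nlinarith [sq_nonneg (z.1 * (D (0, 1)).1 - z.2 * (D (1, 0)).1),
    sq_nonneg (z.1 * (D (0, 1)).2 - z.2 * (D (1, 0)).2)]

lemma abs_dot2_fderiv_apply_add_le (w : ℝ × ℝ → ℝ × ℝ) (p a b u : ℝ × ℝ) :
    |dot2 (fderiv ℝ w p (a + b)) u| ≤ √(jacsq w p) * (√(nsq a) + √(nsq b)) * √(nsq u) :=
  calc |dot2 (fderiv ℝ w p (a + b)) u| ≤ √(nsq (fderiv ℝ w p (a + b))) * √(nsq u) :=
        abs_dot2_le _ _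
    _ ≤ √(jacsq w p) * √(nsq (a + b)) * √(nsq u) := by
        gcongr; exact sqrt_nsq_fderiv_apply_le w p _
    _ ≤ √(jacsq w p) * (√(nsq a) + √(nsq b)) * √(nsq u) := by
        gcongr; exact sqrt_nsq_add_le a b

lemma abs_dot2_fderiv_apply_add_le_of_mul_le {w : ℝ × ℝ → ℝ × ℝ} {p a b u : ℝ × ℝ} {M : ℝ}
    (hp : 0 < p.2) (hu : p.2 * √(nsq u) ≤ M) :
    |dot2 (fderiv ℝ w p (a + b)) u| ≤
      √(nsq b) * (√(jacsq w p) * √(nsq u)) + M * (√(jacsq w p) * (√(nsq a) / p.2)) := by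
  have hu' : √(nsq u) ≤ M / p.2 := (le_div_iff₀ hp).2 (by linarith)
  calc |dot2 (fderiv ℝ w p (a + b)) u|
      ≤ √(jacsq w p) * (√(nsq a) + √(nsq b)) * √(nsq u) := abs_dot2_fderiv_apply_add_le w p a b u
    _ = √(nsq b) * (√(jacsq w p) * √(nsq u)) + √(jacsq w p) * √(nsq a) * √(nsq u) := by ring
    _ ≤ √(nsq b) * (√(jacsq w p) * √(nsq u)) + √(jacsq w p) * √(nsq a) * (M / p.2) := by gcongr
    _ = _ := by ring

lemma continuous_jacsq {v : ℝ × ℝ → ℝ × ℝ} (hv : ContDiff ℝ 1 v) : Continuous (jacsq v) := by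
  have h := hv.continuous_fderiv one_ne_zero
  exact (continuous_nsq.comp (h.clm_apply continuous_const)).add
    (continuous_nsq.comp (h.clm_apply continuous_const))

lemma hasCompactSupport_jacsq {v : ℝ × ℝ → ℝ × ℝ} (hv : HasCompactSupport v) :
    HasCompactSupport (jacsq v) :=
  (hv.fderiv ℝ).mono fun p hp h0 => hp (by simp [jacsq, show fderiv ℝ v p = 0 from h0, nsq])

lemma integrable_jacsq {v : ℝ × ℝ → ℝ × ℝ} (hv : ContDiff ℝ 1 v) (hsupp : HasCompactSupport v) :
    Integrable (jacsq v) :=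
  (continuous_jacsq hv).integrable_of_hasCompactSupport (hasCompactSupport_jacsq hsupp)

lemma Continuous.div_of_tsupport_subset {X : Type*} [TopologicalSpace X] {f g : X → ℝ}
    (hf : Continuous f) (hg : Continuous g) (h : tsupport f ⊆ {x | g x ≠ 0}) :
    Continuous fun x => f x / g x :=
  (hf.continuousOn.div hg.continuousOn fun _ hx => hx).continuous_of_tsupport_subset
    (isOpen_ne_fun hg continuous_const)
    ((closure_mono fun _ hx => (div_ne_zero_iff.mp hx).1).trans h)

lemma integral_mul_le_sqrt_mul_sqrt {α : Type*} [MeasurableSpace α] {μ : Measure α}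
    {f g : α → ℝ} (hf : MemLp f 2 μ) (hg : MemLp g 2 μ) :
    ∫ a, f a * g a ∂μ ≤ √(∫ a, f a ^ 2 ∂μ) * √(∫ a, g a ^ 2 ∂μ) := by
  have hpq : Real.HolderConjugate 2 2 := .two_two
  have h2 : ENNReal.ofReal 2 = 2 := by norm_num
  have holder := integral_mul_norm_le_Lp_mul_Lq hpq (h2 ▸ hf) (h2 ▸ hg)
  simp only [Real.norm_eq_abs, Real.rpow_two, sq_abs, ← Real.sqrt_eq_rpow] at holder
  refine le_trans (integral_mono (hf.integrable_mul hg) ?_ fun a => ?_) holder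
  · exact (hf.norm.integrable_mul hg.norm).congr (.of_forall fun a => rfl)
  · simpa only [abs_mul] using le_abs_self (f a * g a)

theorem integral_div_sq_le_four_mul_integral_deriv_sq {g : ℝ → ℝ} (hg : ContDiff ℝ 1 g)
    (hsupp : HasCompactSupport g) (hpos : tsupport g ⊆ Ioi 0) :
    ∫ y, (g y / y) ^ 2 ≤ 4 * ∫ y, deriv g y ^ 2 := by
  have hq : Continuous fun y => g y / y :=
    hg.continuous.div_of_tsupport_subset continuous_id fun y hy => (hpos hy).ne'
  have hq_supp : HasCompactSupport fun y => g y / y :=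
    hsupp.mono fun _ hy => (div_ne_zero_iff.mp hy).1
  have hq2 : MemLp (fun y => g y / y) 2 := hq.memLp_of_hasCompactSupport hq_supp
  have hg'2 : MemLp (deriv g) 2 :=
    (hg.continuous_deriv le_rfl).memLp_of_hasCompactSupport hsupp.deriv
  have hq2_int : Integrable fun y => (g y / y) ^ 2 := hq2.integrable_sq
  have hqg'_int : Integrable fun y => g y / y * deriv g y := hq2.integrable_mul hg'2
  have hprim : ∀ y, HasDerivAt (fun y => -g y ^ 2 / y)
      ((g y / y) ^ 2 - 2 * (g y / y * deriv g y)) y := by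
    intro y
    by_cases hy : y ∈ tsupport g
    · refine (((hg.differentiable one_ne_zero y).hasDerivAt.fun_pow 2).fun_neg.fun_div
        (hasDerivAt_id' y) (hpos hy).ne').congr_deriv ?_
      field_simp
      ring
    · have hzero : g =ᶠ[𝓝 y] 0 := notMem_tsupport_iff_eventuallyEq.mp hy
      have hval : g y = 0 := hzero.eq_of_nhds
      simpa [hval] using (hasDerivAt_const y (0 : ℝ)).congr_of_eventuallyEq
        (hzero.mono fun z hz => by simp [hz])
  have hφ : Integrable fun y => -g y ^ 2 / y :=
    (continuous_iff_continuousAt.mpr fun y => (hprim y).continuousAt)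
      |>.integrable_of_hasCompactSupport
        (hsupp.mono fun _ hy => by simpa using (div_ne_zero_iff.mp hy).1)
  have hparts : ∫ y, (g y / y) ^ 2 = 2 * ∫ y, g y / y * deriv g y := by
    have h0 := integral_eq_zero_of_hasDerivAt_of_integrable hprim
      (hq2_int.sub (hqg'_int.const_mul 2)) hφ
    rw [integral_sub hq2_int (hqg'_int.const_mul 2), integral_const_mul] at h0
    linarith
  have hcs := integral_mul_le_sqrt_mul_sqrt hq2 hg'2
  have hA : 0 ≤ ∫ y, (g y / y) ^ 2 := integral_nonneg fun y => sq_nonneg _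
  have hB : 0 ≤ ∫ y, deriv g y ^ 2 := integral_nonneg fun y => sq_nonneg _
  nlinarith [Real.sq_sqrt hA, Real.sq_sqrt hB, Real.sqrt_nonneg (∫ y, (g y / y) ^ 2),
    Real.sqrt_nonneg (∫ y, deriv g y ^ 2),
    sq_nonneg (√(∫ y, (g y / y) ^ 2) - 2 * √(∫ y, deriv g y ^ 2))]

section Hardy

variable {f : ℝ × ℝ → ℝ}

lemma integrable_div_snd_sq (hf : Continuous f) (hsupp : HasCompactSupport f)
    (hpos : tsupport f ⊆ {p | 0 < p.2}) : Integrable fun p => (f p / p.2) ^ 2 :=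
  ((hf.div_of_tsupport_subset continuous_snd fun _ hp => (hpos hp).ne').pow 2)
    |>.integrable_of_hasCompactSupport
      (hsupp.mono fun _ hp => (div_ne_zero_iff.mp (pow_ne_zero_iff two_ne_zero |>.mp hp)).1)

lemma integrable_fderiv_apply_sq (hf : ContDiff ℝ 1 f) (hsupp : HasCompactSupport f)
    (z : ℝ × ℝ) : Integrable fun p => fderiv ℝ f p z ^ 2 :=
  (((hf.continuous_fderiv one_ne_zero).clm_apply continuous_const).pow 2)
    |>.integrable_of_hasCompactSupport
      ((hsupp.fderiv ℝ).mono fun p hp h0 => hp (by simp [show fderiv ℝ f p = 0 from h0]))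

theorem integral_div_snd_sq_le_four_mul_integral_fderiv_sq (hf : ContDiff ℝ 1 f)
    (hsupp : HasCompactSupport f) (hpos : tsupport f ⊆ {p | 0 < p.2}) :
    ∫ p, (f p / p.2) ^ 2 ≤ 4 * ∫ p, fderiv ℝ f p (0, 1) ^ 2 := by
  have hH := integrable_div_snd_sq hf.continuous hsupp hpos
  have hD := integrable_fderiv_apply_sq hf hsupp (0, 1)
  have hslice (x : ℝ) : ∫ y, (f (x, y) / y) ^ 2 ≤ 4 * ∫ y, fderiv ℝ f (x, y) (0, 1) ^ 2 := by
    have hslice_tsupp : tsupport (fun y => f (x, y)) ⊆ Prod.mk x ⁻¹' tsupport f :=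
      tsupport_comp_subset_preimage f (Continuous.prodMk_right x)
    have hderiv (y : ℝ) : deriv (fun y => f (x, y)) y = fderiv ℝ f (x, y) (0, 1) :=
      ((hf.differentiable one_ne_zero (x, y)).hasFDerivAt.comp_hasDerivAt y
        ((hasDerivAt_const y x).prodMk (hasDerivAt_id y))).deriv
    simpa only [hderiv] using integral_div_sq_le_four_mul_integral_deriv_sq
      (g := fun y => f (x, y)) (hf.comp (contDiff_const.prodMk contDiff_id))
      ((hsupp.image continuous_snd).of_isClosed_subset (isClosed_tsupport _)
        fun y hy => ⟨(x, y), hslice_tsupp hy, rfl⟩)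
      (hslice_tsupp.trans fun y hy => hpos hy)
  calc ∫ p, (f p / p.2) ^ 2 = ∫ x, ∫ y, (f (x, y) / y) ^ 2 := integral_prod _ hH
    _ ≤ ∫ x, 4 * ∫ y, fderiv ℝ f (x, y) (0, 1) ^ 2 :=
        integral_mono hH.integral_prod_left (hD.integral_prod_left.const_mul 4) hslice
    _ = 4 * ∫ p, fderiv ℝ f p (0, 1) ^ 2 := by
        rw [integral_const_mul]; exact congrArg _ (integral_prod _ hD).symm

end Hardy

theorem integral_nsq_div_sq_le_four_mul_integral_jacsq {v : ℝ × ℝ → ℝ × ℝ}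
    (hv : ContDiff ℝ 1 v) (hsupp : HasCompactSupport v) (hpos : tsupport v ⊆ {p | 0 < p.2}) :
    ∫ p, nsq (v p) / p.2 ^ 2 ≤ 4 * ∫ p, jacsq v p := by
  have hcomp (L : ℝ × ℝ →L[ℝ] ℝ) :
      ContDiff ℝ 1 (fun p => L (v p)) ∧ HasCompactSupport (fun p => L (v p)) ∧
        tsupport (fun p => L (v p)) ⊆ {p | 0 < p.2} :=
    ⟨L.contDiff.comp hv, hsupp.comp_left L.map_zero, (tsupport_comp_subset L.map_zero v).trans hpos⟩
  have hderiv (L : ℝ × ℝ →L[ℝ] ℝ) (p : ℝ × ℝ) :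
      fderiv ℝ (fun p => L (v p)) p (0, 1) = L (fderiv ℝ v p (0, 1)) :=
    DFunLike.congr_fun (L.hasFDerivAt.comp p (hv.differentiable one_ne_zero p).hasFDerivAt).fderiv _
  have hardy (L : ℝ × ℝ →L[ℝ] ℝ) :
      ∫ p, (L (v p) / p.2) ^ 2 ≤ 4 * ∫ p, L (fderiv ℝ v p (0, 1)) ^ 2 := by
    obtain ⟨h1, h2, h3⟩ := hcomp L
    simpa only [hderiv] using integral_div_snd_sq_le_four_mul_integral_fderiv_sq h1 h2 h3
  have hint (L : ℝ × ℝ →L[ℝ] ℝ) : Integrable fun p => (L (v p) / p.2) ^ 2 := by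
    obtain ⟨h1, h2, h3⟩ := hcomp L
    exact integrable_div_snd_sq h1.continuous h2 h3
  have hint' (L : ℝ × ℝ →L[ℝ] ℝ) : Integrable fun p => L (fderiv ℝ v p (0, 1)) ^ 2 := by
    obtain ⟨h1, h2, -⟩ := hcomp L
    simpa only [hderiv] using integrable_fderiv_apply_sq h1 h2 (0, 1)
  let fst := ContinuousLinearMap.fst ℝ ℝ ℝ
  let snd := ContinuousLinearMap.snd ℝ ℝ ℝ
  calc ∫ p, nsq (v p) / p.2 ^ 2 = (∫ p, (fst (v p) / p.2) ^ 2) + ∫ p, (snd (v p) / p.2) ^ 2 := by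
        rw [← integral_add (hint fst) (hint snd)]
        simp only [fst, snd, nsq, ContinuousLinearMap.coe_fst', ContinuousLinearMap.coe_snd',
          div_pow, add_div]
    _ ≤ 4 * ((∫ p, fst (fderiv ℝ v p (0, 1)) ^ 2) + ∫ p, snd (fderiv ℝ v p (0, 1)) ^ 2) := by
        linarith [hardy fst, hardy snd]
    _ = 4 * ∫ p, nsq (fderiv ℝ v p (0, 1)) := by
        rw [← integral_add (hint' fst) (hint' snd)]; rfl
    _ ≤ 4 * ∫ p, jacsq v p := mul_le_mul_of_nonneg_left
        (integral_mono ((hint' fst).add (hint' snd)) (integrable_jacsq hv hsupp)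
          fun p => le_add_of_nonneg_left (nsq_nonneg _)) zero_le_four

theorem sqrt_setIntegral_nsq_div_sq_le {v : ℝ × ℝ → ℝ × ℝ} {s : Set (ℝ × ℝ)}
    (hv : ContDiff ℝ 1 v) (hsupp : HasCompactSupport v) (hs : tsupport v ⊆ s)
    (hpos : tsupport v ⊆ {p | 0 < p.2}) :
    √(∫ p in s, nsq (v p) / p.2 ^ 2) ≤ 2 * √(∫ p in s, jacsq v p) := by
  have hv_out : ∫ p in s, nsq (v p) / p.2 ^ 2 = ∫ p, nsq (v p) / p.2 ^ 2 :=
    setIntegral_eq_integral_of_forall_compl_eq_zero fun p hp => by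
      simp [image_eq_zero_of_notMem_tsupport fun h => hp (hs h), nsq]
  have hjac_out : ∫ p in s, jacsq v p = ∫ p, jacsq v p :=
    setIntegral_eq_integral_of_forall_compl_eq_zero fun p hp => by
      simp [jacsq, fderiv_of_notMem_tsupport ℝ fun h => hp (hs h), nsq]
  have hardy := integral_nsq_div_sq_le_four_mul_integral_jacsq hv hsupp hpos
  calc √(∫ p in s, nsq (v p) / p.2 ^ 2) ≤ √(2 ^ 2 * ∫ p in s, jacsq v p) :=
        Real.sqrt_le_sqrt (by rw [hv_out, hjac_out]; linarith)
    _ = 2 * √(∫ p in s, jacsq v p) := by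
        rw [Real.sqrt_mul (by norm_num), Real.sqrt_sq zero_le_two]

lemma memLp_sqrt_nsq {α : Type*} [MeasurableSpace α] {μ : Measure α} {u : α → ℝ × ℝ}
    (hu : AEStronglyMeasurable u μ) (hint : Integrable (fun a => nsq (u a)) μ) :
    MemLp (fun a => √(nsq (u a))) 2 μ :=
  (memLp_two_iff_integrable_sq
    ((Real.continuous_sqrt.comp continuous_nsq).comp_aestronglyMeasurable hu)).2
    (by simp only [Function.comp_apply, Real.sq_sqrt (nsq_nonneg _)]; exact hint)

lemma memLp_sqrt_jacsq {w : ℝ × ℝ → ℝ × ℝ} (hw : ContDiff ℝ 1 w) (hsupp : HasCompactSupport w) :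
    MemLp (fun p => √(jacsq w p)) 2 :=
  (Real.continuous_sqrt.comp (continuous_jacsq hw)).memLp_of_hasCompactSupport
    ((hasCompactSupport_jacsq hsupp).comp_left Real.sqrt_zero)

lemma memLp_sqrt_nsq_div_snd {v : ℝ × ℝ → ℝ × ℝ} (hv : Continuous v)
    (hsupp : HasCompactSupport v) (hpos : tsupport v ⊆ {p | 0 < p.2}) :
    MemLp (fun p => √(nsq (v p)) / p.2) 2 := by
  have h0 : (fun a => √(nsq a)) 0 = 0 := by simp [nsq]
  exact ((Real.continuous_sqrt.comp (continuous_nsq.comp hv)).div_of_tsupport_subset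
    continuous_snd fun _ hp => (hpos (tsupport_comp_subset (g := fun a => √(nsq a)) h0 v hp)).ne')
    |>.memLp_of_hasCompactSupport
      ((hsupp.comp_left (g := fun a => √(nsq a)) h0).mono fun _ hp => (div_ne_zero_iff.mp hp).1)

theorem abs_integral_dot2_fderiv_add_le {v w ubar : ℝ × ℝ → ℝ × ℝ} {M : ℝ}
    (hv : ContDiff ℝ 1 v) (hw : ContDiff ℝ 1 w) (hsv : HasCompactSupport v)
    (hsw : HasCompactSupport w) (hΩv : tsupport v ⊆ OmegaPlus)
    (hubc : ContinuousOn ubar OmegaPlus) (hubint : IntegrableOn (fun p => nsq (ubar p)) OmegaPlus)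
    (hM : ∀ p ∈ OmegaPlus, p.2 * √(nsq (ubar p)) ≤ M) (hM0 : 0 ≤ M) (b : ℝ × ℝ) :
    |∫ p in OmegaPlus, dot2 (fderiv ℝ w p (v p + b)) (ubar p)| ≤
      √(∫ p in OmegaPlus, jacsq w p) * (√(nsq b) * √(∫ p in OmegaPlus, nsq (ubar p)) +
        M * (2 * √(∫ p in OmegaPlus, jacsq v p))) := by
  have hpos : tsupport v ⊆ {p | 0 < p.2} :=
    hΩv.trans fun p hp => show 0 < p.2 from zero_lt_one.trans hp
  have hG := (memLp_sqrt_jacsq hw hsw).restrict OmegaPlus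
  have hE := (memLp_sqrt_nsq_div_snd hv.continuous hsv hpos).restrict OmegaPlus
  have hN := memLp_sqrt_nsq (hubc.aestronglyMeasurable measurableSet_OmegaPlus) hubint
  have hG2 : ∫ p in OmegaPlus, √(jacsq w p) ^ 2 = ∫ p in OmegaPlus, jacsq w p := by
    simp only [Real.sq_sqrt (jacsq_nonneg w _)]
  have hN2 : ∫ p in OmegaPlus, √(nsq (ubar p)) ^ 2 = ∫ p in OmegaPlus, nsq (ubar p) := by
    simp only [Real.sq_sqrt (nsq_nonneg _)]
  have hE2 : ∫ p in OmegaPlus, (√(nsq (v p)) / p.2) ^ 2 =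
      ∫ p in OmegaPlus, nsq (v p) / p.2 ^ 2 := by
    simp only [div_pow, Real.sq_sqrt (nsq_nonneg _)]
  have hpt : ∀ᵐ p ∂(volume.restrict OmegaPlus),
      |dot2 (fderiv ℝ w p (v p + b)) (ubar p)| ≤
        √(nsq b) * (√(jacsq w p) * √(nsq (ubar p))) +
          M * (√(jacsq w p) * (√(nsq (v p)) / p.2)) := by
    filter_upwards [ae_restrict_mem measurableSet_OmegaPlus] with p hp
    exact abs_dot2_fderiv_apply_add_le_of_mul_le (zero_lt_one.trans hp) (hM p hp)
  have hGN : Integrable (fun p => √(jacsq w p) * √(nsq (ubar p))) (volume.restrict OmegaPlus) :=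
    hG.integrable_mul hN
  have hGE : Integrable (fun p => √(jacsq w p) * (√(nsq (v p)) / p.2))
      (volume.restrict OmegaPlus) :=
    hG.integrable_mul hE
  calc |∫ p in OmegaPlus, dot2 (fderiv ℝ w p (v p + b)) (ubar p)|
      ≤ ∫ p in OmegaPlus, |dot2 (fderiv ℝ w p (v p + b)) (ubar p)| :=
        abs_integral_le_integral_abs
    _ ≤ ∫ p in OmegaPlus, (√(nsq b) * (√(jacsq w p) * √(nsq (ubar p))) +
          M * (√(jacsq w p) * (√(nsq (v p)) / p.2))) :=
        integral_mono_of_nonneg (.of_forall fun _ => abs_nonneg _)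
          ((hGN.const_mul _).add (hGE.const_mul _)) hpt
    _ = √(nsq b) * (∫ p in OmegaPlus, √(jacsq w p) * √(nsq (ubar p))) +
          M * ∫ p in OmegaPlus, √(jacsq w p) * (√(nsq (v p)) / p.2) := by
        rw [integral_add (hGN.const_mul _) (hGE.const_mul _), integral_const_mul,
          integral_const_mul]
    _ ≤ √(nsq b) * (√(∫ p in OmegaPlus, jacsq w p) * √(∫ p in OmegaPlus, nsq (ubar p))) +
          M * (√(∫ p in OmegaPlus, jacsq w p) * (2 * √(∫ p in OmegaPlus, jacsq v p))) := by
        gcongr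
        · exact (integral_mul_le_sqrt_mul_sqrt hG hN).trans_eq (by rw [hG2, hN2])
        · exact (integral_mul_le_sqrt_mul_sqrt hG hE).trans (by
            rw [hG2, hE2]; gcongr; exact sqrt_setIntegral_nsq_div_sq_le hv hsv hΩv hpos)
    _ = _ := by ring

/-- There is a constant `C` such that for all `C¹` vector fields `v, w` compactly supported
in `Ω₊` and every continuous vector field `ū` on `Ω₊` with `‖ū‖_{L²(Ω₊)} < ∞` and
`sup_{Ω₊} y·|ū| ≤ M < ∞`, one has
`|∫_{Ω₊} [((v+e₁)·∇)w]·ū| ≤ C (1 + ‖∇v‖_{L²(Ω₊)}) ‖∇w‖_{L²(Ω₊)} (‖ū‖_{L²(Ω₊)} + M)`. -/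
theorem trilinear_continuity_weighted_one :
    ∃ C : ℝ, ∀ (v w ubar : ℝ × ℝ → ℝ × ℝ) (M : ℝ),
      ContDiff ℝ 1 v → ContDiff ℝ 1 w →
      HasCompactSupport v → HasCompactSupport w →
      tsupport v ⊆ OmegaPlus → tsupport w ⊆ OmegaPlus →
      ContinuousOn ubar OmegaPlus →
      IntegrableOn (fun p => nsq (ubar p)) OmegaPlus →
      (∀ p ∈ OmegaPlus, p.2 * Real.sqrt (nsq (ubar p)) ≤ M) →
      |∫ p in OmegaPlus, dot2 (fderiv ℝ w p (v p + (1, 0))) (ubar p)| ≤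
        C * (1 + (∫ p in OmegaPlus, jacsq v p) ^ ((1 : ℝ)/2)) *
          (∫ p in OmegaPlus, jacsq w p) ^ ((1 : ℝ)/2) *
          ((∫ p in OmegaPlus, nsq (ubar p)) ^ ((1 : ℝ)/2) + M) := by
  refine ⟨2, fun v w ubar M hv hw hsv hsw hΩv _ hubc hubint hM => ?_⟩
  have hM0 : 0 ≤ M :=
    (mul_nonneg zero_le_two (Real.sqrt_nonneg _)).trans (hM (0, 2) (by norm_num [OmegaPlus]))
  have key := abs_integral_dot2_fderiv_add_le hv hw hsv hsw hΩv hubc hubint hM hM0 (1, 0)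
  rw [show nsq (1, 0) = 1 by norm_num [nsq], Real.sqrt_one, one_mul] at key
  simp only [← Real.sqrt_eq_rpow]
  refine key.trans ?_
  have hA := Real.sqrt_nonneg (∫ p in OmegaPlus, jacsq v p)
  have hB := Real.sqrt_nonneg (∫ p in OmegaPlus, jacsq w p)
  have hU := Real.sqrt_nonneg (∫ p in OmegaPlus, nsq (ubar p))
  nlinarith [mul_nonneg hB hU, mul_nonneg hB hM0, mul_nonneg (mul_nonneg hA hB) hU,
    mul_nonneg (mul_nonneg hA hB) hM0]
end
end

section
/- Let α > 1 and p, q ≥ 0. There exists a constant C, depending only on α, such that the following holds. Let y ≥ 1, M ≥ 0, and let g : ℝ → ℂ be a measurable function satisfying |g(k)| ≤ M·(1/(y^p (1 + (|k|y)^α)) + 1/(y^q (1 + (|k|y²)^α))) for almost every k ∈ ℝ. Then the function f(x) = ∫_ℝ e^{ikx} g(k) dk belongs to L²(ℝ) and ‖f‖_{L²(ℝ)} ≤ C·M·(y^{-(p+1/2)} + y^{-(q+1)}). -/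
/-!
Write `f(x) = ∫ e^{ikx} g(k) dk`. Damping `|f|²` by the Gaussian `e^{-εx²}` makes the triple
integral `∫∫∫ g(k) conj(g(l)) e^{i(k-l)x} e^{-εx²}` absolutely convergent, and integrating out `x`
first gives the kernel `√(π/ε) e^{-(k-l)²/(4ε)}`, whose mass is `2π`. Schur's test then bounds the
damped integral by `2π ‖g‖₂²` uniformly in `ε`, and letting `ε → 0` gives `‖f‖₂² ≤ 2π ‖g‖₂²`.
The two terms in the bound on `g` are dilates of `t ↦ 1/(1+|t|^α)`, which lies in `L¹ ∩ L²` for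
`α > 1`; dilating by `y` and `y²` rescales its squared `L²` norm by `y⁻¹` and `y⁻²`.
-/

open MeasureTheory Real Filter Topology
open scoped ComplexConjugate Complex

noncomputable section

def expFourierIntegral (g : ℝ → ℂ) (x : ℝ) : ℂ :=
  ∫ k : ℝ, cexp (Complex.I * k * x) * g k

lemma norm_exp_I_mul_ofReal_mul_ofReal (k x : ℝ) : ‖cexp (Complex.I * k * x)‖ = 1 := by
  rw [Complex.norm_exp]
  simp

lemma integral_exp_I_mul_mul_exp_neg_mul_sq {ε : ℝ} (hε : 0 < ε) (t : ℝ) :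
    ∫ x : ℝ, cexp (Complex.I * t * x) * cexp (-ε * x ^ 2) =
      ((√(π / ε) * rexp (-t ^ 2 / (4 * ε)) : ℝ) : ℂ) := by
  rw [fourierIntegral_gaussian (by simpa using hε), sqrt_eq_rpow,
    Complex.ofReal_mul, Complex.ofReal_cpow (by positivity), Complex.ofReal_exp]
  push_cast
  ring_nf

section Kernel

variable {v W : ℝ → ℝ}

lemma integrable_snd_mul_comp_sub (hv : Integrable v) (hW : Integrable W) :
    Integrable (fun z : ℝ × ℝ => v z.2 * W (z.1 - z.2)) :=
  (measurePreserving_prod_sub_swap volume volume).integrable_comp_of_integrable (hv.mul_prod hW)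

lemma integral_snd_mul_comp_sub (hv : Integrable v) (hW : Integrable W) :
    ∫ z : ℝ × ℝ, v z.2 * W (z.1 - z.2) = (∫ k, v k) * ∫ t, W t := by
  have hmp := measurePreserving_prod_sub_swap (volume : Measure ℝ) volume
  rw [← integral_prod_mul, ← hmp.map_eq, integral_map hmp.measurable.aemeasurable]
  · rfl
  · rw [hmp.map_eq]; exact (hv.mul_prod hW).aestronglyMeasurable

lemma integral_mul_mul_comp_sub_le {u : ℝ → ℝ} (hu : ∀ k, 0 ≤ u k)
    (hu2 : Integrable fun k => u k ^ 2) (hW : Integrable W) (hW0 : ∀ t, 0 ≤ W t)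
    (hW_even : ∀ t, W (-t) = W t) :
    ∫ z : ℝ × ℝ, u z.1 * u z.2 * W (z.1 - z.2) ≤ (∫ t, W t) * ∫ k, u k ^ 2 := by
  have h₂ := integrable_snd_mul_comp_sub hu2 hW
  have h₁ : Integrable (fun z : ℝ × ℝ => u z.1 ^ 2 * W (z.1 - z.2)) := by
    refine h₂.swap.congr (Eventually.of_forall fun z => ?_)
    simp only [Function.comp_apply, Prod.fst_swap, Prod.snd_swap, ← hW_even (z.1 - z.2), neg_sub]
  have hint₁ : ∫ z : ℝ × ℝ, u z.1 ^ 2 * W (z.1 - z.2) = ∫ z : ℝ × ℝ, u z.2 ^ 2 * W (z.1 - z.2) := by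
    rw [Measure.volume_eq_prod, ← integral_prod_swap]
    refine integral_congr_ae (Eventually.of_forall fun z => ?_)
    simp only [Prod.fst_swap, Prod.snd_swap, ← hW_even (z.2 - z.1), neg_sub]
  calc ∫ z : ℝ × ℝ, u z.1 * u z.2 * W (z.1 - z.2)
      ≤ ∫ z : ℝ × ℝ, (u z.1 ^ 2 * W (z.1 - z.2) + u z.2 ^ 2 * W (z.1 - z.2)) / 2 := by
        refine integral_mono_of_nonneg (Eventually.of_forall fun z => ?_) ((h₁.add h₂).div_const 2)
          (Eventually.of_forall fun z => ?_)
        · have := hu z.1; have := hu z.2; have := hW0 (z.1 - z.2); positivity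
        · have := hW0 (z.1 - z.2)
          nlinarith [sq_nonneg (u z.1 - u z.2), mul_nonneg this (sq_nonneg (u z.1 - u z.2))]
    _ = (∫ t, W t) * ∫ k, u k ^ 2 := by
        rw [integral_div, integral_add h₁ h₂, hint₁, integral_snd_mul_comp_sub hu2 hW]
        ring

end Kernel

lemma integrable_and_integral_le_of_integral_mul_exp_neg_mul_sq_le {φ : ℝ → ℝ}
    (hφ0 : ∀ x, 0 ≤ φ x) {B : ℝ}
    (hint : ∀ ε > 0, Integrable fun x => φ x * rexp (-ε * x ^ 2))
    (hB : ∀ ε > 0, ∫ x, φ x * rexp (-ε * x ^ 2) ≤ B) :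
    Integrable φ ∧ ∫ x, φ x ≤ B := by
  set δ : ℕ → ℝ := fun n => 1 / (n + 1)
  have hδ : ∀ n, 0 < δ n := fun n => by positivity
  have htend : ∀ x, Tendsto (fun n => φ x * rexp (-δ n * x ^ 2)) atTop (𝓝 (φ x)) := by
    intro x
    have := ((tendsto_one_div_add_atTop_nhds_zero_nat.neg.mul_const (x ^ 2)).rexp).const_mul (φ x)
    simpa [δ] using this
  have hφ_int : Integrable φ := by
    refine integrable_of_tendsto (Eventually.of_forall htend) (fun n => (hint _ (hδ n)).1)
      (ne_top_of_le_ne_top (ENNReal.ofReal_ne_top (r := B))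
        (liminf_le_of_frequently_le' (Frequently.of_forall fun n => ?_)))
    rw [← ofReal_integral_norm_eq_lintegral_enorm (hint _ (hδ n))]
    refine ENNReal.ofReal_le_ofReal ((integral_congr_ae (Eventually.of_forall fun x => ?_)).trans_le
      (hB _ (hδ n)))
    exact Real.norm_of_nonneg (mul_nonneg (hφ0 x) (exp_pos _).le)
  refine ⟨hφ_int, le_of_tendsto' (tendsto_integral_of_dominated_convergence φ
    (fun n => (hint _ (hδ n)).1) hφ_int (fun n => Eventually.of_forall fun x => ?_)
    (Eventually.of_forall htend)) fun n => hB _ (hδ n)⟩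
  rw [Real.norm_of_nonneg (mul_nonneg (hφ0 x) (exp_pos _).le)]
  exact mul_le_of_le_one_right (hφ0 x) (exp_le_one_iff.mpr (by nlinarith [hδ n, sq_nonneg x]))

section ExpFourierIntegral

variable {g : ℝ → ℂ}

lemma norm_expFourierIntegral_le (x : ℝ) : ‖expFourierIntegral g x‖ ≤ ∫ k, ‖g k‖ :=
  (norm_integral_le_integral_norm _).trans_eq <| by
    simp only [norm_mul, norm_exp_I_mul_ofReal_mul_ofReal, one_mul]

lemma continuous_expFourierIntegral (hg : Integrable g) : Continuous (expFourierIntegral g) :=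
  continuous_of_dominated (bound := fun k => ‖g k‖)
    (fun x => (Continuous.aestronglyMeasurable (by fun_prop)).mul hg.1)
    (fun x => Eventually.of_forall fun k => by
      rw [norm_mul, norm_exp_I_mul_ofReal_mul_ofReal, one_mul])
    hg.norm (Eventually.of_forall fun k => by fun_prop)

def dampedFourierKernel (g : ℝ → ℂ) (ε x : ℝ) (z : ℝ × ℝ) : ℂ :=
  cexp (Complex.I * z.1 * x) * g z.1 * conj (cexp (Complex.I * z.2 * x) * g z.2) *
    cexp (-ε * x ^ 2)

lemma integral_dampedFourierKernel (ε x : ℝ) :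
    ∫ z, dampedFourierKernel g ε x z =
      ((‖expFourierIntegral g x‖ ^ 2 * rexp (-ε * x ^ 2) : ℝ) : ℂ) := by
  simp only [dampedFourierKernel]
  rw [integral_mul_const, Measure.volume_eq_prod,
    integral_prod_mul (fun k : ℝ => cexp (Complex.I * k * x) * g k)
      (fun l : ℝ => conj (cexp (Complex.I * l * x) * g l)),
    integral_conj, Complex.mul_conj, Complex.normSq_eq_norm_sq]
  push_cast
  rfl

lemma integral_dampedFourierKernel_swap {ε : ℝ} (hε : 0 < ε) (z : ℝ × ℝ) :
    ∫ x, dampedFourierKernel g ε x z =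
      g z.1 * conj (g z.2) * ((√(π / ε) * rexp (-(z.1 - z.2) ^ 2 / (4 * ε)) : ℝ) : ℂ) := by
  rw [← integral_exp_I_mul_mul_exp_neg_mul_sq hε, ← integral_const_mul]
  congr 1 with x
  simp only [dampedFourierKernel, map_mul, ← Complex.exp_conj, Complex.conj_I,
    Complex.conj_ofReal]
  rw [show cexp (Complex.I * ↑(z.1 - z.2) * x) =
    cexp (Complex.I * z.1 * x) * cexp (-Complex.I * z.2 * x) by
      rw [← Complex.exp_add]; push_cast; ring_nf]
  ring

lemma integrable_dampedFourierKernel (hg : Integrable g) {ε : ℝ} (hε : 0 < ε) :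
    Integrable (Function.uncurry (dampedFourierKernel g ε)) (volume.prod volume) := by
  have hmeas : AEStronglyMeasurable (Function.uncurry (dampedFourierKernel g ε))
      (volume.prod volume) := by
    have h₁ : AEStronglyMeasurable (fun w : ℝ × (ℝ × ℝ) => g w.2.1) (volume.prod volume) :=
      hg.1.comp_fst.comp_snd
    have h₂ : AEStronglyMeasurable (fun w : ℝ × (ℝ × ℝ) => g w.2.2) (volume.prod volume) :=
      hg.1.comp_snd.comp_snd
    exact ((((Continuous.aestronglyMeasurable (by fun_prop)).mul h₁).mul
      ((((Continuous.aestronglyMeasurable (by fun_prop)).mul h₂)).star)).mul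
      (Continuous.aestronglyMeasurable (by fun_prop)))
  refine ((integrable_exp_neg_mul_sq hε).mul_prod (hg.norm.mul_prod hg.norm)).mono' hmeas
    (Eventually.of_forall fun w => le_of_eq ?_)
  simp only [Function.uncurry, dampedFourierKernel, norm_mul, RCLike.norm_conj,
    norm_exp_I_mul_ofReal_mul_ofReal, one_mul]
  rw [Complex.norm_exp]
  norm_cast
  ring

lemma integral_norm_sq_expFourierIntegral_mul_exp_neg_mul_sq_le (hg : Integrable g) {ε : ℝ}
    (hε : 0 < ε) :
    ∫ x, ‖expFourierIntegral g x‖ ^ 2 * rexp (-ε * x ^ 2) ≤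
      √(π / ε) * ∫ z : ℝ × ℝ, ‖g z.1‖ * ‖g z.2‖ * rexp (-(z.1 - z.2) ^ 2 / (4 * ε)) := by
  set K := dampedFourierKernel g ε
  calc ∫ x, ‖expFourierIntegral g x‖ ^ 2 * rexp (-ε * x ^ 2)
      = (∫ x, ∫ z, K x z).re := by
        simp only [K, integral_dampedFourierKernel]
        rw [integral_complex_ofReal, Complex.ofReal_re]
    _ = (∫ z, ∫ x, K x z).re := by
        rw [integral_integral_swap (integrable_dampedFourierKernel hg hε)]
    _ ≤ ∫ z, ‖∫ x, K x z‖ := (Complex.re_le_norm _).trans (norm_integral_le_integral_norm _)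
    _ = √(π / ε) * ∫ z : ℝ × ℝ, ‖g z.1‖ * ‖g z.2‖ * rexp (-(z.1 - z.2) ^ 2 / (4 * ε)) := by
      rw [← integral_const_mul]
      congr 1 with z
      rw [integral_dampedFourierKernel_swap hε, norm_mul, norm_mul, RCLike.norm_conj,
        Complex.norm_real, Real.norm_of_nonneg (by positivity)]
      ring

lemma integral_norm_sq_expFourierIntegral_mul_exp_neg_mul_sq_le_two_pi (hg : Integrable g)
    (hg2 : Integrable fun k => ‖g k‖ ^ 2) {ε : ℝ} (hε : 0 < ε) :
    ∫ x, ‖expFourierIntegral g x‖ ^ 2 * rexp (-ε * x ^ 2) ≤ 2 * π * ∫ k, ‖g k‖ ^ 2 := by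
  set W : ℝ → ℝ := fun t => rexp (-t ^ 2 / (4 * ε))
  have hW_eq : W = fun t => rexp (-(4 * ε)⁻¹ * t ^ 2) := by
    ext t; simp only [W]; ring_nf
  have hW : Integrable W := hW_eq ▸ integrable_exp_neg_mul_sq (by positivity)
  have hW_mass : √(π / ε) * ∫ t, W t = 2 * π := by
    rw [hW_eq, integral_gaussian, ← sqrt_mul (by positivity),
      show π / ε * (π / (4 * ε)⁻¹) = (2 * π) ^ 2 by field_simp; ring, sqrt_sq (by positivity)]
  calc ∫ x, ‖expFourierIntegral g x‖ ^ 2 * rexp (-ε * x ^ 2)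
      ≤ √(π / ε) * ∫ z : ℝ × ℝ, ‖g z.1‖ * ‖g z.2‖ * W (z.1 - z.2) :=
        integral_norm_sq_expFourierIntegral_mul_exp_neg_mul_sq_le hg hε
    _ ≤ √(π / ε) * ((∫ t, W t) * ∫ k, ‖g k‖ ^ 2) := by
        gcongr
        exact integral_mul_mul_comp_sub_le (fun k => norm_nonneg _) hg2 hW
          (fun t => (exp_pos _).le) (fun t => by simp [W])
    _ = 2 * π * ∫ k, ‖g k‖ ^ 2 := by rw [← mul_assoc, hW_mass]

theorem integrable_norm_sq_expFourierIntegral_and_integral_le (hg : Integrable g)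
    (hg2 : Integrable fun k => ‖g k‖ ^ 2) :
    Integrable (fun x => ‖expFourierIntegral g x‖ ^ 2) ∧
      ∫ x, ‖expFourierIntegral g x‖ ^ 2 ≤ 2 * π * ∫ k, ‖g k‖ ^ 2 := by
  refine integrable_and_integral_le_of_integral_mul_exp_neg_mul_sq_le (fun x => sq_nonneg _)
    (fun ε hε => ?_) (fun ε hε => integral_norm_sq_expFourierIntegral_mul_exp_neg_mul_sq_le_two_pi
      hg hg2 hε)
  refine ((integrable_exp_neg_mul_sq hε).const_mul ((∫ k, ‖g k‖) ^ 2)).mono'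
    ((continuous_expFourierIntegral hg).norm.pow 2 |>.mul (by fun_prop)).aestronglyMeasurable
    (Eventually.of_forall fun x => ?_)
  rw [norm_of_nonneg (by positivity)]
  gcongr
  exact norm_expFourierIntegral_le x

end ExpFourierIntegral

lemma integrable_sq_norm_and_integral_le_of_norm_le_add {X E : Type*} [MeasurableSpace X]
    {μ : Measure X} [NormedAddCommGroup E] {g : X → E} {A B : X → ℝ}
    (hg : AEStronglyMeasurable g μ) (hA : Integrable (fun x => A x ^ 2) μ)
    (hB : Integrable (fun x => B x ^ 2) μ) (hgAB : ∀ᵐ x ∂μ, ‖g x‖ ≤ A x + B x) :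
    Integrable (fun x => ‖g x‖ ^ 2) μ ∧
      ∫ x, ‖g x‖ ^ 2 ∂μ ≤ 2 * ((∫ x, A x ^ 2 ∂μ) + ∫ x, B x ^ 2 ∂μ) := by
  have hle : ∀ᵐ x ∂μ, ‖g x‖ ^ 2 ≤ 2 * (A x ^ 2 + B x ^ 2) := by
    filter_upwards [hgAB] with x hx
    nlinarith [norm_nonneg (g x), sq_nonneg (A x - B x)]
  have hint : Integrable (fun x => ‖g x‖ ^ 2) μ :=
    ((hA.add hB).const_mul 2).mono' (hg.norm.pow 2)
      (hle.mono fun x hx => by rwa [norm_of_nonneg (sq_nonneg _)])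
  refine ⟨hint, (integral_mono_ae hint ((hA.add hB).const_mul 2) hle).trans_eq ?_⟩
  rw [integral_const_mul]
  exact congrArg (2 * ·) (integral_add hA hB)

lemma rpow_neg_add_sq {y : ℝ} (hy : 0 < y) (p s : ℝ) :
    (y ^ (-(p + s))) ^ 2 = ((y ^ p)⁻¹) ^ 2 * (y ^ (2 * s))⁻¹ := by
  rw [rpow_neg hy.le, rpow_add hy, mul_inv, mul_pow, mul_comm 2 s, rpow_mul hy.le, rpow_two,
    inv_pow, inv_pow]

lemma integrable_sq_const_mul_comp_mul_left {h : ℝ → ℝ} (hh2 : Integrable fun t => h t ^ 2)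
    (c : ℝ) {a : ℝ} (ha : a ≠ 0) : Integrable fun k => (c * h (a * k)) ^ 2 := by
  simpa only [mul_pow] using (hh2.comp_mul_left' ha).const_mul (c ^ 2)

lemma integral_sq_const_mul_comp_mul_left (h : ℝ → ℝ) (c : ℝ) {a : ℝ} (ha : 0 < a) :
    ∫ k, (c * h (a * k)) ^ 2 = c ^ 2 * a⁻¹ * ∫ t, h t ^ 2 := by
  simp_rw [mul_pow]
  rw [integral_const_mul, Measure.integral_comp_mul_left (fun t => h t ^ 2), smul_eq_mul,
    abs_of_pos (inv_pos.mpr ha), mul_assoc]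

section Profile

variable {α : ℝ}

lemma one_add_abs_rpow_le (hα : 1 ≤ α) (t : ℝ) :
    (1 + |t|) ^ α ≤ 2 ^ (α - 1) * (1 + |t| ^ α) := by
  have := NNReal.rpow_add_le_mul_rpow_add_rpow 1 ‖t‖₊ hα
  rw [← NNReal.coe_le_coe] at this
  simpa [NNReal.coe_rpow] using this

lemma integrable_one_div_one_add_abs_rpow (hα : 1 < α) :
    Integrable fun t : ℝ => 1 / (1 + |t| ^ α) := by
  refine ((integrable_one_add_norm (E := ℝ) (μ := volume) (by simpa using hα)).const_mul
    (2 ^ (α - 1))).mono' (Measurable.aestronglyMeasurable (by fun_prop))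
    (Eventually.of_forall fun t => ?_)
  rw [norm_of_nonneg (by positivity), Real.norm_eq_abs, rpow_neg (by positivity), ← div_eq_mul_inv,
    div_le_div_iff₀ (by positivity) (by positivity), one_mul]
  exact one_add_abs_rpow_le hα.le t

lemma integrable_one_div_one_add_abs_rpow_sq (hα : 1 < α) :
    Integrable fun t : ℝ => (1 / (1 + |t| ^ α)) ^ 2 := by
  refine (integrable_one_div_one_add_abs_rpow hα).mono'
    (Measurable.aestronglyMeasurable (by fun_prop))
    (Eventually.of_forall fun t => ?_)
  have h0 : 0 ≤ 1 / (1 + |t| ^ α) := by positivity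
  have h1 : 1 / (1 + |t| ^ α) ≤ 1 := by
    rw [div_le_one (by positivity)]; linarith [rpow_nonneg (abs_nonneg t) α]
  rw [norm_of_nonneg (by positivity)]
  nlinarith

lemma one_div_mul_one_add_abs_mul_rpow {a : ℝ} (ha : 0 < a) (c k : ℝ) :
    1 / (c * (1 + (|k| * a) ^ α)) = c⁻¹ * (1 / (1 + |a * k| ^ α)) := by
  rw [abs_mul, abs_of_pos ha, mul_comm a, one_div, one_div, mul_inv]

lemma integrable_and_integral_norm_sq_le_of_norm_le_dilates (hα : 1 < α) {p q y M : ℝ}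
    (hy : 0 < y) {g : ℝ → ℂ} (hg : AEStronglyMeasurable g)
    (hbd : ∀ᵐ k : ℝ, ‖g k‖ ≤
      M * (1 / (y ^ p * (1 + (|k| * y) ^ α)) + 1 / (y ^ q * (1 + (|k| * y ^ 2) ^ α)))) :
    Integrable g ∧ Integrable (fun k => ‖g k‖ ^ 2) ∧
      ∫ k, ‖g k‖ ^ 2 ≤ 2 * M ^ 2 * (∫ t, (1 / (1 + |t| ^ α)) ^ 2) *
        ((y ^ (-(p + 1/2))) ^ 2 + (y ^ (-(q + 1))) ^ 2) := by
  set h : ℝ → ℝ := fun t => 1 / (1 + |t| ^ α)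
  have hy2 : 0 < y ^ 2 := pow_pos hy 2
  set A : ℝ → ℝ := fun k => M * (y ^ p)⁻¹ * h (y * k)
  set B : ℝ → ℝ := fun k => M * (y ^ q)⁻¹ * h (y ^ 2 * k)
  have hgAB : ∀ᵐ k, ‖g k‖ ≤ A k + B k := by
    filter_upwards [hbd] with k hk
    rwa [one_div_mul_one_add_abs_mul_rpow hy, one_div_mul_one_add_abs_mul_rpow hy2, mul_add,
      ← mul_assoc, ← mul_assoc] at hk
  have hh := integrable_one_div_one_add_abs_rpow hα
  have hh2 := integrable_one_div_one_add_abs_rpow_sq hα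
  have hIA : ∫ k, A k ^ 2 = M ^ 2 * (∫ t, h t ^ 2) * (y ^ (-(p + 1/2))) ^ 2 := by
    rw [integral_sq_const_mul_comp_mul_left h _ hy, rpow_neg_add_sq hy]
    norm_num
    ring
  have hIB : ∫ k, B k ^ 2 = M ^ 2 * (∫ t, h t ^ 2) * (y ^ (-(q + 1))) ^ 2 := by
    rw [integral_sq_const_mul_comp_mul_left h _ hy2, rpow_neg_add_sq hy]
    norm_num
    ring
  obtain ⟨hg2, hg2_le⟩ := integrable_sq_norm_and_integral_le_of_norm_le_add hg
    (integrable_sq_const_mul_comp_mul_left hh2 _ hy.ne')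
    (integrable_sq_const_mul_comp_mul_left hh2 _ hy2.ne') hgAB
  refine ⟨((hh.comp_mul_left' hy.ne').const_mul _ |>.add
    ((hh.comp_mul_left' hy2.ne').const_mul _)).mono' hg hgAB, hg2, hg2_le.trans_eq ?_⟩
  rw [hIA, hIB]
  ring

end Profile

/-- For `α > 1` there is a constant `C` (depending only on `α`) such that: for all
`p, q ≥ 0`, `y ≥ 1`, `M ≥ 0` and every measurable `g : ℝ → ℂ` with
`|g(k)| ≤ M (1/(y^p(1+(|k|y)^α)) + 1/(y^q(1+(|k|y²)^α)))` a.e., the function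
`f(x) = ∫ e^{ikx} g(k) dk` belongs to `L²(ℝ)` and
`‖f‖_{L²(ℝ)} ≤ C M (y^{-(p+1/2)} + y^{-(q+1)})`. -/
theorem fourier_integral_L2_bound (α : ℝ) (hα : 1 < α) :
    ∃ C : ℝ, ∀ (p q y M : ℝ) (g : ℝ → ℂ),
      0 ≤ p → 0 ≤ q → 1 ≤ y → 0 ≤ M → Measurable g →
      (∀ᵐ k : ℝ, ‖g k‖ ≤
        M * (1 / (y ^ p * (1 + (|k| * y) ^ α)) + 1 / (y ^ q * (1 + (|k| * y ^ 2) ^ α)))) →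
      MemLp (fun x : ℝ => ∫ k : ℝ, Complex.exp (Complex.I * k * x) * g k) 2 volume ∧
      (∫ x : ℝ, ‖∫ k : ℝ, Complex.exp (Complex.I * k * x) * g k‖ ^ 2) ^ ((1 : ℝ)/2) ≤
        C * M * (y ^ (-(p + 1/2)) + y ^ (-(q + 1))) := by
  set I : ℝ := ∫ t, (1 / (1 + |t| ^ α)) ^ 2
  refine ⟨√(4 * π * I), fun p q y M g _ _ hy hM hg hbd => ?_⟩
  have hy0 : 0 < y := one_pos.trans_le hy
  obtain ⟨hg_int, hg2, hg2_le⟩ :=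
    integrable_and_integral_norm_sq_le_of_norm_le_dilates hα hy0 hg.aestronglyMeasurable hbd
  obtain ⟨hF2, hF2_le⟩ := integrable_norm_sq_expFourierIntegral_and_integral_le hg_int hg2
  refine ⟨(memLp_two_iff_integrable_sq_norm
    (continuous_expFourierIntegral hg_int).aestronglyMeasurable).2 hF2, ?_⟩
  rw [← sqrt_eq_rpow, sqrt_le_iff]
  refine ⟨by positivity, hF2_le.trans ?_⟩
  have hI : 0 ≤ I := integral_nonneg fun t => sq_nonneg _
  have hu : 0 ≤ y ^ (-(p + 1/2)) := rpow_nonneg hy0.le _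
  have hv : 0 ≤ y ^ (-(q + 1)) := rpow_nonneg hy0.le _
  calc 2 * π * ∫ k, ‖g k‖ ^ 2
      ≤ 4 * π * I * M ^ 2 * ((y ^ (-(p + 1/2))) ^ 2 + (y ^ (-(q + 1))) ^ 2) := by
        nlinarith [mul_le_mul_of_nonneg_left hg2_le two_pi_pos.le]
    _ ≤ (√(4 * π * I) * M * (y ^ (-(p + 1/2)) + y ^ (-(q + 1)))) ^ 2 := by
        rw [mul_pow, mul_pow, sq_sqrt (by positivity)]
        gcongr
        nlinarith [mul_nonneg hu hv]
end
end
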